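/- arXiv:1703.02560 — 2 statements merged into one kernel-verified Lean document; each statement's English description precedes it below -/
import Mathlib

section
/- In the octonions defined by the Cayley–Dickson construction from the quaternions, every nonzero element x satisfies x · (conj(x)/‖x‖²) = 1 and (conj(x)/‖x‖²) · x = 1; in particular the octonions have no zero divisors. -/
noncomputable section

/-- The octonions, realized as pairs of quaternions via the Cayley–Dickson construction. -/
abbrev Octonion := Quaternion ℝ × Quaternion ℝ

/-- Cayley–Dickson multiplication on `ℍ × ℍ`. -/
def omul (x y : Octonion) : Octonion :=
  (x.1 * y.1 - star y.2 * x.2, y.2 * x.1 + x.2 * star y.1)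

/-- Octonionic conjugation. -/
def oconj (x : Octonion) : Octonion := (star x.1, -x.2)

/-- The Euclidean norm of `ℝ⁸` on the octonions. -/
def onorm (x : Octonion) : ℝ := Real.sqrt (‖x.1‖ ^ 2 + ‖x.2‖ ^ 2)

/-- The Euclidean inner product of `ℝ⁸` on the octonions. -/
def oinner (x y : Octonion) : ℝ := (inner ℝ x.1 y.1 : ℝ) + (inner ℝ x.2 y.2 : ℝ)

/-- The embedding of the complex numbers into the quaternions (span of 1 and i). -/
def cH (a : ℂ) : Quaternion ℝ := ⟨a.re, a.im, 0, 0⟩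

/-- The embedding of the complex numbers into the octonions. -/
def cO (a : ℂ) : Octonion := (cH a, 0)

/-!
Both inverse identities say `x · conj x = conj x · x = ‖x‖² · 1`. Despite non-associativity,
the octonions also satisfy `conj x · (x · y) = ‖x‖² · y`: componentwise this is a computation
in the associative algebra `ℍ` that only uses `conj a · a = a · conj a = ‖a‖²`, which is real,
hence central. So `x · y = 0` with `x ≠ 0` forces `y = 0`.
-/

open Quaternion

lemma onorm_sq (x : Octonion) : onorm x ^ 2 = normSq x.1 + normSq x.2 := by
  rw [onorm, Real.sq_sqrt (by positivity), normSq_eq_norm_mul_self, normSq_eq_norm_mul_self, sq, sq]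

lemma onorm_sq_ne_zero {x : Octonion} (hx : x ≠ 0) : onorm x ^ 2 ≠ 0 := by
  rw [onorm_sq]
  contrapose! hx
  obtain ⟨h1, h2⟩ := (add_eq_zero_iff_of_nonneg normSq_nonneg normSq_nonneg).1 hx
  exact Prod.ext (normSq_eq_zero.1 h1) (normSq_eq_zero.1 h2)

lemma omul_smul_left (c : ℝ) (x y : Octonion) : omul (c • x) y = c • omul x y := by
  simp only [omul, Prod.smul_mk, Prod.smul_fst, Prod.smul_snd, smul_mul_assoc, mul_smul_comm,
    smul_sub, smul_add]

lemma omul_smul_right (c : ℝ) (x y : Octonion) : omul x (c • y) = c • omul x y := by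
  simp only [omul, Prod.smul_mk, Prod.smul_fst, Prod.smul_snd, smul_mul_assoc, mul_smul_comm,
    smul_sub, smul_add, Quaternion.star_smul]

lemma omul_zero (x : Octonion) : omul x 0 = 0 := by
  simp [omul]

lemma omul_self_oconj (x : Octonion) : omul x (oconj x) = onorm x ^ 2 • ((1, 0) : Octonion) := by
  obtain ⟨a, b⟩ := x
  simp only [omul, oconj, self_mul_star, star_neg, neg_mul, star_mul_self, sub_neg_eq_add,
    star_star, neg_add_cancel, onorm_sq, Prod.smul_mk, smul_zero, Prod.ext_iff, and_true]
  rw [← coe_add, ← coe_mul_eq_smul, mul_one]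

lemma omul_oconj_self (x : Octonion) : omul (oconj x) x = onorm x ^ 2 • ((1, 0) : Octonion) := by
  obtain ⟨a, b⟩ := x
  simp only [omul, oconj, star_mul_self, mul_neg, sub_neg_eq_add, neg_mul, add_neg_cancel, onorm_sq,
    Prod.smul_mk, smul_zero, Prod.ext_iff, and_true]
  rw [← coe_add, ← coe_mul_eq_smul, mul_one]

lemma omul_oconj_omul (x y : Octonion) : omul (oconj x) (omul x y) = onorm x ^ 2 • y := by
  obtain ⟨a, b⟩ := x
  obtain ⟨c, d⟩ := y
  simp only [omul, oconj, onorm_sq, Prod.smul_mk, add_smul, star_add, star_sub, star_mul, star_star]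
  refine Prod.ext ?_ ?_
  · calc star a * (a * c - star d * b) - (star a * star d + c * star b) * -b
        = star a * a * c + c * (star b * b) := by noncomm_ring
      _ = normSq a • c + normSq b • c := by
        rw [star_mul_self, star_mul_self, coe_mul_eq_smul, mul_coe_eq_smul]
  · calc (d * a + b * star c) * star a + -b * (star c * star a - star b * d)
        = d * (a * star a) + b * star b * d := by noncomm_ring
      _ = normSq a • d + normSq b • d := by
        rw [self_mul_star, self_mul_star, mul_coe_eq_smul, coe_mul_eq_smul]

theorem octonion_inverse_and_no_zero_divisors :
    (∀ x : Octonion, x ≠ 0 →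
      omul x ((onorm x ^ 2)⁻¹ • oconj x) = (1, 0) ∧
      omul ((onorm x ^ 2)⁻¹ • oconj x) x = (1, 0)) ∧
    (∀ x y : Octonion, omul x y = 0 → x = 0 ∨ y = 0) := by
  refine ⟨fun x hx => ⟨?_, ?_⟩, fun x y hxy => or_iff_not_imp_left.2 fun hx => ?_⟩
  · rw [omul_smul_right, omul_self_oconj, smul_smul, inv_mul_cancel₀ (onorm_sq_ne_zero hx),
      one_smul]
  · rw [omul_smul_left, omul_oconj_self, smul_smul, inv_mul_cancel₀ (onorm_sq_ne_zero hx),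
      one_smul]
  · have h := omul_oconj_omul x y
    rw [hxy, omul_zero] at h
    exact (smul_eq_zero.1 h.symm).resolve_left (onorm_sq_ne_zero hx)
end
end

section
/- For every x ∈ 𝕆 and purely imaginary v ∈ 𝕆, the averaged vector field (1/2π)∫₀^{2π} e^{-iθ}·((e^{iθ}·x)·v) dθ equals (x·v - i·((i·x)·v))/2. -/
/-!
Writing `e^{±iθ} = cos θ ± i sin θ` and using only the ℝ-bilinearity of the octonion product
(no associativity is needed), the integrand is the trigonometric quadratic
`cos² θ · x v + sin θ cos θ · ((i x) v - i (x v)) - sin² θ · i ((i x) v)`.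
Over a period `cos²` and `sin²` both average to `1/2` while `sin θ cos θ` averages to `0`.
-/

noncomputable section

/-- `i = e₁` as an octonion. -/
def oI : Octonion := ((⟨0,1,0,0⟩ : Quaternion ℝ), 0)

lemma omul_add_left (a b z : Octonion) : omul (a + b) z = omul a z + omul b z := by
  ext : 1 <;> simp only [omul, Prod.fst_add, Prod.snd_add, Prod.mk_add_mk] <;> noncomm_ring

lemma omul_add_right (z a b : Octonion) : omul z (a + b) = omul z a + omul z b := by
  ext : 1 <;> simp only [omul, Prod.fst_add, Prod.snd_add, Prod.mk_add_mk, star_add] <;> noncomm_ring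

lemma omul_smul_left_s17 (r : ℝ) (a z : Octonion) : omul (r • a) z = r • omul a z := by
  ext : 1 <;> simp [omul, smul_sub, smul_add]

lemma omul_smul_right_s17 (r : ℝ) (z a : Octonion) : omul z (r • a) = r • omul z a := by
  ext : 1 <;> simp [omul, smul_sub, smul_add]

open Quaternion in
lemma cH_one : cH 1 = 1 := by
  ext <;> simp [cH]

lemma omul_cO_one_left (z : Octonion) : omul (cO 1) z = z := by
  simp [omul, cO, cH_one]

open Quaternion in
lemma cO_exp_mul_I (θ : ℝ) :
    cO (Complex.exp (θ * Complex.I)) = Real.cos θ • cO 1 + Real.sin θ • oI := by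
  rw [cO, cO, cH_one]
  ext <;> simp [cH, Complex.exp_ofReal_mul_I_re, Complex.exp_ofReal_mul_I_im] <;> simp [oI]

lemma omul_cO_exp_neg_omul_cO_exp (θ : ℝ) (x v : Octonion) :
    omul (cO (Complex.exp (-θ * Complex.I))) (omul (omul (cO (Complex.exp (θ * Complex.I))) x) v) =
      (Real.cos θ ^ 2) • omul x v +
        (Real.sin θ * Real.cos θ) • (omul (omul oI x) v - omul oI (omul x v)) +
        (Real.sin θ ^ 2) • -omul oI (omul (omul oI x) v) := by
  rw [← Complex.ofReal_neg, cO_exp_mul_I, cO_exp_mul_I, Real.cos_neg, Real.sin_neg]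
  simp only [omul_add_left, omul_add_right, omul_smul_left_s17, omul_smul_right_s17, omul_cO_one_left]
  module

lemma integral_cos_sq_smul_add_sin_mul_cos_smul_add_sin_sq_smul {E : Type*}
    [NormedAddCommGroup E] [NormedSpace ℝ E] [CompleteSpace E] (a b c : E) :
    ∫ θ in (0 : ℝ)..(2 * Real.pi),
        (Real.cos θ ^ 2) • a + (Real.sin θ * Real.cos θ) • b + (Real.sin θ ^ 2) • c =
      Real.pi • (a + c) := by
  rw [intervalIntegral.integral_add, intervalIntegral.integral_add,
    intervalIntegral.integral_smul_const, intervalIntegral.integral_smul_const,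
    intervalIntegral.integral_smul_const, integral_cos_sq, integral_sin_mul_cos₁, integral_sin_sq]
  · simp [smul_add]
  all_goals apply Continuous.intervalIntegrable; fun_prop

theorem octonion_average_equals_Wfield_general (x v : Octonion) :
    (1 / (2 * Real.pi)) •
        (∫ θ in (0 : ℝ)..(2 * Real.pi),
          omul (cO (Complex.exp (-θ * Complex.I)))
            (omul (omul (cO (Complex.exp (θ * Complex.I))) x) v)) =
      (1 / 2 : ℝ) • (omul x v - omul oI (omul (omul oI x) v)) := by
  simp_rw [omul_cO_exp_neg_omul_cO_exp, integral_cos_sq_smul_add_sin_mul_cos_smul_add_sin_sq_smul,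
    smul_smul, ← sub_eq_add_neg]
  congr 1
  field_simp

theorem octonion_average_equals_Wfield (x v : Octonion) (hv : v.1.re = 0) :
    (1 / (2 * Real.pi)) •
        (∫ θ in (0 : ℝ)..(2 * Real.pi),
          omul (cO (Complex.exp (-θ * Complex.I)))
            (omul (omul (cO (Complex.exp (θ * Complex.I))) x) v)) =
      (1 / 2 : ℝ) • (omul x v - omul oI (omul (omul oI x) v)) :=
  octonion_average_equals_Wfield_general x v
end
end
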